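/- Let n ≥ 1. For every g ∈ O(1,n+1) and every x ∈ S^n, the first component t of g·(1,x)ᵀ is nonzero and g∘x ∈ S^n; moreover 1∘x = x and (gh)∘x = g∘(h∘x) for all g, h ∈ O(1,n+1), so that ∘ defines a group action of O(1,n+1) on S^n, and this action is transitive. -/
import Mathlib


open Matrix

noncomputable section

/-- The quadratic form matrix `J = diag(1,−1,…,−1)`. -/
def Jmat (n : ℕ) : Matrix (Fin (n + 2)) (Fin (n + 2)) ℝ :=
  diagonal fun i => if i = 0 then 1 else -1

/-- Membership in `O(1,n+1)`: `gᵀ J g = J`. -/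
def inO (n : ℕ) (g : Matrix (Fin (n + 2)) (Fin (n + 2)) ℝ) : Prop :=
  gᵀ * Jmat n * g = Jmat n

/-- The action `g∘x = v/t` where `g·(1,x)ᵀ = (t,v)`. -/
def act (n : ℕ) (g : Matrix (Fin (n + 2)) (Fin (n + 2)) ℝ) (x : Fin (n + 1) → ℝ) :
    Fin (n + 1) → ℝ :=
  (g.mulVec (Fin.cons 1 x) 0)⁻¹ • fun i => g.mulVec (Fin.cons 1 x) i.succ

lemma Jmat_mul_Jmat (n : ℕ) : Jmat n * Jmat n = 1 := by
  rw [Jmat, diagonal_mul_diagonal]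
  have : (fun i : Fin (n+2) => (if i = 0 then (1:ℝ) else -1) * (if i = 0 then 1 else -1))
      = fun _ => 1 := funext fun i => by split <;> ring
  rw [this, diagonal_one]

lemma quad_invariant {n : ℕ} (g : Matrix (Fin (n + 2)) (Fin (n + 2)) ℝ) (hg : inO n g)
    (u : Fin (n + 2) → ℝ) :
    (g.mulVec u) ⬝ᵥ (Jmat n).mulVec (g.mulVec u) = u ⬝ᵥ (Jmat n).mulVec u := by
  have h1 : (g *ᵥ u) ᵥ* Jmat n = u ᵥ* (gᵀ * Jmat n) := by
    rw [← vecMul_transpose, vecMul_vecMul]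
  calc (g *ᵥ u) ⬝ᵥ (Jmat n *ᵥ (g *ᵥ u))
      = ((g *ᵥ u) ᵥ* Jmat n) ⬝ᵥ (g *ᵥ u) := dotProduct_mulVec _ _ _
    _ = (u ᵥ* (gᵀ * Jmat n)) ⬝ᵥ (g *ᵥ u) := by rw [h1]
    _ = ((u ᵥ* (gᵀ * Jmat n)) ᵥ* g) ⬝ᵥ u := by rw [dotProduct_mulVec]
    _ = (u ᵥ* (gᵀ * Jmat n * g)) ⬝ᵥ u := by rw [vecMul_vecMul]
    _ = (u ᵥ* Jmat n) ⬝ᵥ u := by rw [hg]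
    _ = u ⬝ᵥ (Jmat n *ᵥ u) := by
        rw [dotProduct_mulVec]

lemma quad_eq {n : ℕ} (v : Fin (n + 2) → ℝ) :
    v ⬝ᵥ (Jmat n).mulVec v = v 0 ^ 2 - ∑ i : Fin (n + 1), v i.succ ^ 2 := by
  simp only [Jmat, dotProduct, mulVec_diagonal]
  rw [Fin.sum_univ_succ]
  simp only [if_pos rfl, Fin.succ_ne_zero, if_neg, if_false]
  have h : ∀ x : Fin (n+1), v x.succ * (-1 * v x.succ) = -(v x.succ ^ 2) := fun x => by ring
  rw [Finset.sum_congr rfl fun i _ => h i, Finset.sum_neg_distrib]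
  simp; ring

lemma left_inv {n : ℕ} {g : Matrix (Fin (n + 2)) (Fin (n + 2)) ℝ} (hg : inO n g) :
    (Jmat n * gᵀ * Jmat n) * g = 1 := by
  have : Jmat n * (gᵀ * Jmat n * g) = Jmat n * Jmat n := by rw [hg]
  rw [Jmat_mul_Jmat] at this
  rw [← this]; noncomm_ring

lemma mulVec_ne {n : ℕ} {g : Matrix (Fin (n + 2)) (Fin (n + 2)) ℝ} (hg : inO n g)
    {u : Fin (n + 2) → ℝ} (hu : u ≠ 0) : g.mulVec u ≠ 0 := by
  intro h0
  apply hu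
  have := congrArg (fun v => (Jmat n * gᵀ * Jmat n).mulVec v) h0
  simpa [mulVec_mulVec, left_inv hg] using this

lemma key {n : ℕ} (g : Matrix (Fin (n + 2)) (Fin (n + 2)) ℝ) (x : Fin (n + 1) → ℝ)
    (hg : inO n g) (hx : (∑ i, x i ^ 2) = 1) :
    g.mulVec (Fin.cons 1 x) 0 ≠ 0 ∧ (∑ i, act n g x i ^ 2) = 1 := by
  set u : Fin (n + 2) → ℝ := Fin.cons 1 x with hu
  set v := g.mulVec u with hv
  have hq : v 0 ^ 2 - ∑ i : Fin (n+1), v i.succ ^ 2 = 0 := by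
    rw [← quad_eq, hv, quad_invariant g hg, quad_eq]
    simp [hu, hx]
  have hsum : ∑ i : Fin (n+1), v i.succ ^ 2 = v 0 ^ 2 := by linarith
  have ht : v 0 ≠ 0 := by
    intro h0
    have hz : ∀ i : Fin (n+1), v i.succ = 0 := by
      intro i
      have hnn : ∀ j ∈ Finset.univ, (0:ℝ) ≤ v (Fin.succ j) ^ 2 := fun j _ => sq_nonneg _
      have : v i.succ ^ 2 = 0 := by
        have h0' : ∑ i : Fin (n+1), v i.succ ^ 2 = 0 := by rw [hsum, h0]; ring
        exact (Finset.sum_eq_zero_iff_of_nonneg hnn).1 h0' i (Finset.mem_univ i)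
      exact pow_eq_zero_iff (by norm_num) |>.1 this
    have hv0 : v = 0 := by
      funext i
      refine Fin.cases ?_ ?_ i
      · exact h0
      · exact hz
    have hune : u ≠ 0 := by
      intro h
      have := congrFun h 0
      simp [hu] at this
    exact mulVec_ne hg hune hv0
  refine ⟨ht, ?_⟩
  have : ∑ i, act n g x i ^ 2 = (v 0)⁻¹ ^ 2 * ∑ i : Fin (n+1), v i.succ ^ 2 := by
    rw [Finset.mul_sum]
    refine Finset.sum_congr rfl fun i _ => ?_
    simp [act, ← hu, ← hv, Pi.smul_apply, smul_eq_mul]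
    ring
  rw [this, hsum]
  field_simp

lemma act_one {n : ℕ} (x : Fin (n + 1) → ℝ) : act n 1 x = x := by
  funext i
  simp [act, one_mulVec]

lemma inO_mul {n : ℕ} {g h : Matrix (Fin (n + 2)) (Fin (n + 2)) ℝ}
    (hg : inO n g) (hh : inO n h) : inO n (g * h) := by
  unfold inO at *
  rw [transpose_mul]
  calc hᵀ * gᵀ * Jmat n * (g * h) = hᵀ * (gᵀ * Jmat n * g) * h := by noncomm_ring
    _ = Jmat n := by rw [hg, hh]

lemma act_mul {n : ℕ} (g h : Matrix (Fin (n + 2)) (Fin (n + 2)) ℝ) (x : Fin (n + 1) → ℝ)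
    (hg : inO n g) (hh : inO n h) (hx : (∑ i, x i ^ 2) = 1) :
    act n (g * h) x = act n g (act n h x) := by
  set u : Fin (n + 2) → ℝ := Fin.cons 1 x with hu
  set w := h.mulVec u with hw
  have hs : w 0 ≠ 0 := (key h x hh hx).1
  have ht : ((g * h).mulVec u) 0 ≠ 0 := (key (g * h) x (inO_mul hg hh) hx).1
  have hcons : (Fin.cons 1 (act n h x) : Fin (n + 2) → ℝ) = (w 0)⁻¹ • w := by
    funext i
    refine Fin.cases ?_ ?_ i
    · simp [inv_mul_cancel₀ hs]
    · intro j
      simp [act, ← hu, ← hw, Pi.smul_apply, smul_eq_mul]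
  have hgw : g.mulVec ((w 0)⁻¹ • w) = (w 0)⁻¹ • (g * h).mulVec u := by
    rw [mulVec_smul, hw, mulVec_mulVec]
  funext i
  conv_rhs => rw [act]
  rw [hcons, hgw]
  conv_lhs => rw [act]
  simp only [← hu, Pi.smul_apply, smul_eq_mul]
  field_simp

/-- Embed an (n+1)×(n+1) matrix as the block matrix diag(1, A). -/
def emb (n : ℕ) (A : Matrix (Fin (n + 1)) (Fin (n + 1)) ℝ) :
    Matrix (Fin (n + 2)) (Fin (n + 2)) ℝ :=
  Fin.cons (Fin.cons 1 0) fun i => Fin.cons 0 (A i)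

lemma emb_mulVec {n : ℕ} (A : Matrix (Fin (n + 1)) (Fin (n + 1)) ℝ) (x : Fin (n + 1) → ℝ) :
    (emb n A).mulVec (Fin.cons 1 x) = Fin.cons 1 (A.mulVec x) := by
  funext i
  refine Fin.cases ?_ ?_ i
  · simp [emb, mulVec, dotProduct, Fin.sum_univ_succ]
  · intro j
    simp [emb, mulVec, dotProduct, Fin.sum_univ_succ]

lemma emb_act {n : ℕ} (A : Matrix (Fin (n + 1)) (Fin (n + 1)) ℝ) (x : Fin (n + 1) → ℝ) :
    act n (emb n A) x = A.mulVec x := by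
  funext i
  simp [act, emb_mulVec]

lemma emb_inO {n : ℕ} {A : Matrix (Fin (n + 1)) (Fin (n + 1)) ℝ} (hA : Aᵀ * A = 1) :
    inO n (emb n A) := by
  have hkey : ∀ i' j' : Fin (n + 1), (∑ k, A k i' * A k j') = if i' = j' then 1 else 0 := by
    intro i' j'
    have := congrFun (congrFun hA i') j'
    simpa [Matrix.mul_apply, Matrix.one_apply] using this
  unfold inO
  ext i j
  have entry : ((emb n A)ᵀ * Jmat n * (emb n A)) i j
      = ∑ k, (if k = (0 : Fin (n+2)) then (1:ℝ) else -1) * emb n A k i * emb n A k j := by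
    rw [Matrix.mul_apply]
    refine Finset.sum_congr rfl fun k _ => ?_
    simp only [Jmat, Matrix.mul_diagonal, Matrix.transpose_apply]
    ring
  rw [entry, Fin.sum_univ_succ]
  refine Fin.cases ?_ ?_ i <;> [skip; intro i'] <;> refine Fin.cases ?_ ?_ j
  · simp [emb, Jmat, diagonal, Fin.succ_ne_zero]
  · intro j'
    simp [emb, Jmat, diagonal, Fin.succ_ne_zero, (Fin.succ_ne_zero j').symm]
  · simp [emb, Jmat, diagonal, Fin.succ_ne_zero]
  · intro j'
    have hsum : ∑ x : Fin (n+1),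
        (if (x.succ : Fin (n+2)) = 0 then (1:ℝ) else -1) * emb n A x.succ i'.succ
          * emb n A x.succ j'.succ
        = -∑ k, A k i' * A k j' := by
      rw [← Finset.sum_neg_distrib]
      refine Finset.sum_congr rfl fun k _ => ?_
      simp [emb, Fin.succ_ne_zero]
    rw [hsum, hkey]
    simp [emb, Jmat, diagonal, Fin.succ_ne_zero, Fin.succ_inj]
    split <;> simp

lemma householder {m : ℕ} (x y : Fin (m + 1) → ℝ) (hx : (∑ i, x i ^ 2) = 1)
    (hy : (∑ i, y i ^ 2) = 1) (hne : x ≠ y) :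
    ∃ A : Matrix (Fin (m + 1)) (Fin (m + 1)) ℝ, Aᵀ * A = 1 ∧ A.mulVec x = y := by
  set w : Fin (m + 1) → ℝ := x - y with hw
  set c : ℝ := ∑ i, w i ^ 2 with hc
  have hc0 : c ≠ 0 := by
    intro h0
    apply hne
    funext i
    have hnn : ∀ i ∈ Finset.univ, (0:ℝ) ≤ w i ^ 2 := fun i _ => sq_nonneg _
    have hz : w i ^ 2 = 0 :=
      (Finset.sum_eq_zero_iff_of_nonneg hnn).1 h0 i (Finset.mem_univ i)
    have : w i = 0 := pow_eq_zero_iff (two_ne_zero) |>.1 hz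
    have : x i - y i = 0 := this
    linarith
  set M := vecMulVec w w with hM
  set s : ℝ := 2 / c with hs
  set A := (1 : Matrix (Fin (m+1)) (Fin (m+1)) ℝ) - s • M with hA
  have hMM : M * M = c • M := by
    ext i j
    simp only [hM, Matrix.mul_apply, vecMulVec_apply, Matrix.smul_apply, smul_eq_mul]
    calc ∑ k, (w i * w k) * (w k * w j) = ∑ k, w k ^ 2 * (w i * w j) :=
          Finset.sum_congr rfl fun k _ => by ring
      _ = c * (w i * w j) := by rw [← Finset.sum_mul, ← hc]
  have hAA : A * A = 1 := by
    have expand : A * A = 1 - s • M - s • M + (s * s) • (M * M) := by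
      rw [hA, sub_mul, mul_sub, mul_sub, one_mul, mul_one, Matrix.smul_mul]
      simp only [one_mul, mul_smul_comm, smul_smul]
      abel
    rw [expand, hMM, smul_smul]
    have hssc : s * s * c = s + s := by rw [hs]; field_simp; ring
    rw [hssc, add_smul]
    abel
  have hAT : Aᵀ = A := by
    rw [hA, transpose_sub, transpose_one, transpose_smul]
    congr 1
    ext i j
    simp [hM, vecMulVec_apply, mul_comm]
  set d : ℝ := ∑ i, x i * y i with hd
  have hwx : ∑ j, w j * x j = 1 - d := by
    simp only [hw, Pi.sub_apply, sub_mul]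
    rw [Finset.sum_sub_distrib]
    have h1 : ∑ j, x j * x j = 1 := by
      rw [← hx]; exact Finset.sum_congr rfl fun j _ => (sq (x j)).symm
    have h2 : ∑ j, y j * x j = d := by
      rw [hd]; exact Finset.sum_congr rfl fun j _ => mul_comm _ _
    rw [h1, h2]
  have hcd : c = 2 - 2 * d := by
    rw [hc]
    simp only [hw, Pi.sub_apply]
    have : ∀ j : Fin (m+1), (x j - y j) ^ 2 = x j ^ 2 - 2 * (x j * y j) + y j ^ 2 :=
      fun j => by ring
    rw [Finset.sum_congr rfl fun j _ => this j, Finset.sum_add_distrib,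
      Finset.sum_sub_distrib, hx, hy, ← Finset.mul_sum, ← hd]
    ring
  have hsd : s * (1 - d) = 1 := by
    rw [hs]
    field_simp
    rw [hcd]; ring
  refine ⟨A, by rw [hAT, hAA], ?_⟩
  funext i
  have hMx : (M.mulVec x) i = w i * (1 - d) := by
    simp only [hM, mulVec, dotProduct, vecMulVec_apply]
    calc ∑ j, w i * w j * x j = w i * ∑ j, w j * x j := by
          rw [Finset.mul_sum]; exact Finset.sum_congr rfl fun j _ => by ring
      _ = w i * (1 - d) := by rw [hwx]
  rw [hA, sub_mulVec, one_mulVec]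
  simp only [Pi.sub_apply, smul_mulVec, Pi.smul_apply, smul_eq_mul, hMx]
  have hwi : w i = x i - y i := rfl
  rw [hwi]
  linear_combination (y i - x i) * hsd

/-- `∘` is a well-defined transitive action of `O(1,n+1)` on the unit sphere
`Sⁿ ⊆ ℝ^{n+1}`. -/
theorem stmt13 (n : ℕ) (hn : 1 ≤ n) :
    (∀ (g : Matrix (Fin (n + 2)) (Fin (n + 2)) ℝ) (x : Fin (n + 1) → ℝ),
        inO n g → (∑ i, x i ^ 2) = 1 →
        g.mulVec (Fin.cons 1 x) 0 ≠ 0 ∧ (∑ i, act n g x i ^ 2) = 1) ∧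
    (∀ x : Fin (n + 1) → ℝ, (∑ i, x i ^ 2) = 1 → act n 1 x = x) ∧
    (∀ (g h : Matrix (Fin (n + 2)) (Fin (n + 2)) ℝ) (x : Fin (n + 1) → ℝ),
        inO n g → inO n h → (∑ i, x i ^ 2) = 1 →
        act n (g * h) x = act n g (act n h x)) ∧
    (∀ x y : Fin (n + 1) → ℝ, (∑ i, x i ^ 2) = 1 → (∑ i, y i ^ 2) = 1 →
        ∃ g, inO n g ∧ act n g x = y) := by
  refine ⟨fun g x hg hx => key g x hg hx, fun x _ => act_one x,
    fun g h x hg hh hx => act_mul g h x hg hh hx, fun x y hx hy => ?_⟩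
  by_cases hxy : x = y
  · refine ⟨1, ?_, by rw [act_one, hxy]⟩
    unfold inO
    simp [transpose_one]
  · obtain ⟨A, hA1, hA2⟩ := householder x y hx hy hxy
    exact ⟨emb n A, emb_inO hA1, by rw [emb_act, hA2]⟩

end
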